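/- arXiv:2004.14912 — 5 statements merged into one kernel-verified Lean document; each statement's English description precedes it below -/
import Mathlib

section
/- Strict convexity of the normalising constant (Lemma 1): Let π be a probability measure on a measurable space Θ and let L : Θ → ℝ be measurable with 0 < L(θ) ≤ C for all θ. Assume L is not π-almost-everywhere equal to a constant. Then the function c(a) = ∫_Θ L(θ)^{a} dπ(θ) is strictly convex on [0,∞): for all 0 ≤ a < b and 0 < λ < 1, c(λa + (1−λ)b) < λ c(a) + (1−λ) c(b). -/
open MeasureTheory
open MeasureTheory Set

lemma key_le (x a b l : ℝ) (hx : 0 < x) (hl : 0 < l) (hl1 : l < 1) :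
    x ^ (l * a + (1 - l) * b) ≤ l * x ^ a + (1 - l) * x ^ b := by
  rcases eq_or_ne x 1 with rfl | hne
  · simp only [Real.one_rpow]; linarith
  · have hlog : Real.log x ≠ 0 := Real.log_ne_zero_of_pos_of_ne_one hx hne
    have h := convexOn_exp.2 (Set.mem_univ (Real.log x * a)) (Set.mem_univ (Real.log x * b))
      hl.le (by linarith : (0:ℝ) ≤ 1 - l) (by ring)
    simp only [smul_eq_mul] at h
    rw [Real.rpow_def_of_pos hx, Real.rpow_def_of_pos hx, Real.rpow_def_of_pos hx]
    calc Real.exp (Real.log x * (l * a + (1 - l) * b))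
        = Real.exp (l * (Real.log x * a) + (1 - l) * (Real.log x * b)) := by ring_nf
      _ ≤ l * Real.exp (Real.log x * a) + (1 - l) * Real.exp (Real.log x * b) := h

lemma key_lt (x a b l : ℝ) (hx : 0 < x) (hab : a ≠ b) (hl : 0 < l) (hl1 : l < 1)
    (hne : x ≠ 1) :
    x ^ (l * a + (1 - l) * b) < l * x ^ a + (1 - l) * x ^ b := by
  have hlog : Real.log x ≠ 0 := Real.log_ne_zero_of_pos_of_ne_one hx hne
  have hpts : Real.log x * a ≠ Real.log x * b := by
    intro h; exact hab (mul_left_cancel₀ hlog h)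
  have h := strictConvexOn_exp.2 (Set.mem_univ (Real.log x * a)) (Set.mem_univ (Real.log x * b))
    hpts hl (by linarith : (0:ℝ) < 1 - l) (by ring)
  simp only [smul_eq_mul] at h
  rw [Real.rpow_def_of_pos hx, Real.rpow_def_of_pos hx, Real.rpow_def_of_pos hx]
  calc Real.exp (Real.log x * (l * a + (1 - l) * b))
      = Real.exp (l * (Real.log x * a) + (1 - l) * (Real.log x * b)) := by ring_nf
    _ < l * Real.exp (Real.log x * a) + (1 - l) * Real.exp (Real.log x * b) := h

lemma integrable_pow {Θ : Type*} [MeasurableSpace Θ] (π : Measure Θ) [IsProbabilityMeasure π]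
    (L : Θ → ℝ) (hL : Measurable L) (C : ℝ) (hbound : ∀ θ, 0 < L θ ∧ L θ ≤ C)
    (a : ℝ) (ha : 0 ≤ a) : Integrable (fun θ => L θ ^ a) π := by
  refine Integrable.mono' (integrable_const ((max 1 C) ^ a))
    (((Real.continuous_rpow_const ha).measurable.comp hL).aestronglyMeasurable) (Filter.Eventually.of_forall fun θ => ?_)
  have h1 := (hbound θ).1
  have h2 : L θ ≤ max 1 C := le_trans (hbound θ).2 (le_max_right _ _)
  rw [Real.norm_eq_abs, abs_of_nonneg (Real.rpow_nonneg h1.le a)]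
  exact Real.rpow_le_rpow h1.le h2 ha

/-- Strict convexity of the normalising constant (Lemma 1): if `0 < L θ ≤ C`
and `L` is not `π`-almost-everywhere constant, then `c(a) = ∫ θ, L θ ^ a ∂π`
is strictly convex on `[0, ∞)`. -/
theorem power_prior_normalising_constant_strictConvex
    {Θ : Type*} [MeasurableSpace Θ] (π : Measure Θ) [IsProbabilityMeasure π]
    (L : Θ → ℝ) (hL : Measurable L) (C : ℝ)
    (hbound : ∀ θ, 0 < L θ ∧ L θ ≤ C)
    (hnonconst : ¬ ∃ k : ℝ, ∀ᵐ θ ∂π, L θ = k) :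
    ∀ a b : ℝ, 0 ≤ a → a < b → ∀ l : ℝ, 0 < l → l < 1 →
      (∫ θ, L θ ^ (l * a + (1 - l) * b) ∂π)
        < l * (∫ θ, L θ ^ a ∂π) + (1 - l) * (∫ θ, L θ ^ b ∂π) := by
  intro a b ha hab l hl hl1
  have hb : (0:ℝ) ≤ b := le_trans ha hab.le
  have hmid : (0:ℝ) ≤ l * a + (1 - l) * b := by nlinarith
  have hia := integrable_pow π L hL C hbound a ha
  have hib := integrable_pow π L hL C hbound b hb
  have him := integrable_pow π L hL C hbound _ hmid
  have hadd : Integrable (fun θ => l * L θ ^ a + (1 - l) * L θ ^ b) π :=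
    (hia.const_mul l).add (hib.const_mul (1 - l))
  have hfi : Integrable
      (fun θ => l * L θ ^ a + (1 - l) * L θ ^ b - L θ ^ (l * a + (1 - l) * b)) π :=
    hadd.sub him
  have hfnn : ∀ θ, 0 ≤ l * L θ ^ a + (1 - l) * L θ ^ b - L θ ^ (l * a + (1 - l) * b) :=
    fun θ => sub_nonneg.2 (key_le (L θ) a b l (hbound θ).1 hl hl1)
  have hpos : 0 < ∫ θ, (l * L θ ^ a + (1 - l) * L θ ^ b - L θ ^ (l * a + (1 - l) * b)) ∂π := by
    rw [integral_pos_iff_support_of_nonneg_ae (Filter.Eventually.of_forall hfnn) hfi]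
    have h1 : ¬ ∀ᵐ θ ∂π, L θ = 1 := fun h => hnonconst ⟨1, h⟩
    rw [MeasureTheory.ae_iff] at h1
    have hsub : {θ | ¬ L θ = 1} ⊆
        Function.support (fun θ => l * L θ ^ a + (1 - l) * L θ ^ b
          - L θ ^ (l * a + (1 - l) * b)) := fun θ hθ =>
      ne_of_gt (sub_pos.2 (key_lt (L θ) a b l (hbound θ).1 (ne_of_lt hab) hl hl1 hθ))
    exact lt_of_lt_of_le (pos_iff_ne_zero.mpr h1) (measure_mono hsub)
  have heq : ∫ θ, (l * L θ ^ a + (1 - l) * L θ ^ b - L θ ^ (l * a + (1 - l) * b)) ∂π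
      = (l * (∫ θ, L θ ^ a ∂π) + (1 - l) * (∫ θ, L θ ^ b ∂π))
        - ∫ θ, L θ ^ (l * a + (1 - l) * b) ∂π := by
    rw [integral_sub hadd him, integral_add (hia.const_mul l) (hib.const_mul (1 - l)),
      MeasureTheory.integral_const_mul, MeasureTheory.integral_const_mul]
  rw [heq] at hpos
  linarith
end

section
/- Second derivative of the normalising constant (Proposition 1, second order): Let π be a probability measure on a measurable space Θ and let L : Θ → ℝ be measurable with 0 < L(θ) ≤ C for all θ. Then for every a₀ > 0 the function a ↦ ∫_Θ L(θ)^{a} log L(θ) dπ(θ) is differentiable at a₀ with derivative ∫_Θ L(θ)^{a₀} (log L(θ))² dπ(θ); i.e. c(a) = ∫_Θ L(θ)^{a} dπ(θ) is twice differentiable on (0,∞) with c″(a₀) = ∫_Θ L(θ)^{a₀} (log L(θ))² dπ(θ) ≥ 0. -/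
/-!
Differentiate under the integral sign. For `a` in the ball of radius `a₀ / 2` about `a₀`, the
`a`-derivative `L ^ a * (log L) ^ (n + 1)` of the integrand is bounded uniformly in `θ`: where
`L ≤ 1` because `x ^ b * |log x| ^ k ≤ (k / b) ^ k` on `(0, 1]` for `b > 0`, and where `L > 1`
because `1 < L ≤ C`.
-/

open MeasureTheory

namespace Real

lemma abs_rpow_mul_log_pow_le_of_le_one {x a : ℝ} (n : ℕ) (hx₀ : 0 < x) (hx₁ : x ≤ 1)
    (ha : 0 < a) : |x ^ a * log x ^ n| ≤ (n / a) ^ n := by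
  rcases n.eq_zero_or_pos with rfl | hn
  · simpa [abs_of_pos (rpow_pos_of_pos hx₀ a)] using rpow_le_one hx₀.le hx₁ ha.le
  have hlog : |log x * x ^ (a / n)| ≤ n / a := by
    simpa using (abs_log_mul_self_rpow_lt x (a / n) hx₀ hx₁ (by positivity)).le
  calc |x ^ a * log x ^ n| = |log x * x ^ (a / n)| ^ n := by
        rw [← abs_pow, mul_pow, ← rpow_natCast (x ^ (a / n)), ← rpow_mul hx₀.le,
          div_mul_cancel₀ a (by positivity), mul_comm]
    _ ≤ (n / a) ^ n := pow_le_pow_left₀ (abs_nonneg _) hlog n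

lemma abs_rpow_mul_log_pow_le {x a b B C : ℝ} (n : ℕ) (hx₀ : 0 < x) (hxC : x ≤ C)
    (hb : 0 < b) (hba : b ≤ a) (haB : a ≤ B) :
    |x ^ a * log x ^ n| ≤ (n / b) ^ n + C ^ B * |log C| ^ n := by
  have hC : 0 < C := hx₀.trans_le hxC
  rcases le_or_gt x 1 with hx₁ | hx₁
  · calc |x ^ a * log x ^ n| = |x ^ b * log x ^ n| * x ^ (a - b) := by
          rw [abs_mul, abs_mul, abs_of_pos (rpow_pos_of_pos hx₀ a),
            abs_of_pos (rpow_pos_of_pos hx₀ b), mul_right_comm, ← rpow_add hx₀,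
            add_sub_cancel]
      _ ≤ (n / b) ^ n * 1 := by
          gcongr
          · exact abs_rpow_mul_log_pow_le_of_le_one n hx₀ hx₁ hb
          · exact rpow_le_one hx₀.le hx₁ (sub_nonneg.2 hba)
      _ ≤ (n / b) ^ n + C ^ B * |log C| ^ n := by
          rw [mul_one]; exact le_add_of_nonneg_right (by positivity)
  · have hlog : |log x| ≤ |log C| := by
      rw [abs_of_pos (log_pos hx₁), abs_of_pos (log_pos (hx₁.trans_le hxC))]
      exact log_le_log hx₀ hxC
    calc |x ^ a * log x ^ n| = x ^ a * |log x| ^ n := by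
          rw [abs_mul, abs_pow, abs_of_pos (rpow_pos_of_pos hx₀ a)]
      _ ≤ C ^ B * |log C| ^ n := by
          gcongr
          calc x ^ a ≤ C ^ a := rpow_le_rpow hx₀.le hxC (hb.trans_le hba).le
            _ ≤ C ^ B := rpow_le_rpow_of_exponent_le (hx₁.le.trans hxC) haB
      _ ≤ (n / b) ^ n + C ^ B * |log C| ^ n := le_add_of_nonneg_left (by positivity)

lemma hasDerivAt_rpow_mul_log_pow {x : ℝ} (hx : 0 < x) (n : ℕ) (a : ℝ) :
    HasDerivAt (fun a => x ^ a * log x ^ n) (x ^ a * log x ^ (n + 1)) a := by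
  rw [pow_succ', ← mul_assoc]
  exact (hasStrictDerivAt_const_rpow hx a).hasDerivAt.mul_const _

end Real

theorem hasDerivAt_integral_rpow_mul_log_pow {Θ : Type*} [MeasurableSpace Θ] {μ : Measure Θ}
    [IsFiniteMeasure μ] {L : Θ → ℝ} (hL : Measurable L) {C : ℝ} (hL₀ : ∀ θ, 0 < L θ)
    (hLC : ∀ θ, L θ ≤ C) (n : ℕ) {a₀ : ℝ} (ha₀ : 0 < a₀) :
    HasDerivAt (fun a => ∫ θ, L θ ^ a * Real.log (L θ) ^ n ∂μ)
      (∫ θ, L θ ^ a₀ * Real.log (L θ) ^ (n + 1) ∂μ) a₀ := by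
  have hmeas : ∀ (k : ℕ) (a : ℝ),
      AEStronglyMeasurable (fun θ => L θ ^ a * Real.log (L θ) ^ k) μ := fun k a =>
    (by fun_prop : Measurable fun θ => L θ ^ a * Real.log (L θ) ^ k).aestronglyMeasurable
  have hint : Integrable (fun θ => L θ ^ a₀ * Real.log (L θ) ^ n) μ :=
    (integrable_const _).mono' (hmeas n a₀) (ae_of_all _ fun θ =>
      Real.abs_rpow_mul_log_pow_le n (hL₀ θ) (hLC θ) ha₀ le_rfl le_rfl)
  have hdom : ∀ θ, ∀ a ∈ Metric.ball a₀ (a₀ / 2), ‖L θ ^ a * Real.log (L θ) ^ (n + 1)‖ ≤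
      ((n + 1 : ℕ) / (a₀ / 2)) ^ (n + 1) + C ^ (2 * a₀) * |Real.log C| ^ (n + 1) := by
    intro θ a ha
    rw [Metric.mem_ball, Real.dist_eq, abs_lt] at ha
    exact Real.abs_rpow_mul_log_pow_le (n + 1) (hL₀ θ) (hLC θ) (half_pos ha₀)
      (by linarith) (by linarith)
  exact (hasDerivAt_integral_of_dominated_loc_of_deriv_le
    (Metric.ball_mem_nhds a₀ (half_pos ha₀)) (.of_forall (hmeas n)) hint (hmeas (n + 1) a₀)
    (ae_of_all _ hdom) (integrable_const _)
    (ae_of_all _ fun θ a _ => Real.hasDerivAt_rpow_mul_log_pow (hL₀ θ) n a)).2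

/-- Second derivative of the normalising constant (Proposition 1, second order):
for `0 < L θ ≤ C` and `a₀ > 0`, the map `a ↦ ∫ θ, L θ ^ a * log (L θ) ∂π` is
differentiable at `a₀` with derivative `∫ θ, L θ ^ a₀ * (log (L θ))² ∂π`, which
is nonnegative. -/
theorem power_prior_normalising_constant_second_deriv
    {Θ : Type*} [MeasurableSpace Θ] (π : Measure Θ) [IsProbabilityMeasure π]
    (L : Θ → ℝ) (hL : Measurable L) (C : ℝ)
    (hbound : ∀ θ, 0 < L θ ∧ L θ ≤ C)
    (a₀ : ℝ) (ha₀ : 0 < a₀) :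
    HasDerivAt (fun a : ℝ => ∫ θ, L θ ^ a * Real.log (L θ) ∂π)
      (∫ θ, L θ ^ a₀ * (Real.log (L θ)) ^ 2 ∂π) a₀ ∧
    0 ≤ ∫ θ, L θ ^ a₀ * (Real.log (L θ)) ^ 2 ∂π := by
  have hderiv := hasDerivAt_integral_rpow_mul_log_pow (μ := π) hL
    (fun θ => (hbound θ).1) (fun θ => (hbound θ).2) 1 ha₀
  refine ⟨by simpa using hderiv, integral_nonneg fun θ => ?_⟩
  have := (hbound θ).1
  positivity
end

section
/- Derivative of the Poisson normalising constant (Equation 17): In the setting of Equation 16, define c(a₀) = (β₀^{α₀}/Γ(α₀)) · p′^{−a₀} · Γ(a₀ s + α₀) / (a₀ N₀ + β₀)^{a₀ s + α₀} for a₀ ≥ 0, and let ψ₀ denote the digamma function, ψ₀(x) = d/dx log Γ(x) for x > 0. Then for every a₀ > 0, c is differentiable at a₀ with c′(a₀) = [ −log p′ − N₀ (α₀ + s a₀)/(β₀ + N₀ a₀) − s log(β₀ + N₀ a₀) + s ψ₀(α₀ + s a₀) ] · c(a₀). -/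
/-!
Since `c > 0` near `a₀`, it suffices to differentiate `log c`, which splits into
`log (β₀^{α₀}/Γ(α₀)) − a log p' + log Γ(a s + α₀) − (a s + α₀) log(a N₀ + β₀)`;
differentiating term by term gives the bracket of Equation 17, and `c' = (log c)' · c`.
-/

open Filter Topology Real

theorem HasDerivAt.of_log {f : ℝ → ℝ} {x L : ℝ} (hf : ∀ᶠ t in 𝓝 x, 0 < f t)
    (h : HasDerivAt (fun t => Real.log (f t)) L x) : HasDerivAt f (L * f x) x := by
  have hexp : (fun t => Real.exp (Real.log (f t))) =ᶠ[𝓝 x] f := hf.mono fun _ ht => exp_log ht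
  rw [mul_comm, ← exp_log hf.self_of_nhds]
  exact h.exp.congr_of_eventuallyEq hexp.symm

section NormalisingConstant

variable {K p s N α β a : ℝ}

theorem normConst_pos (hK : 0 < K) (hp : 0 < p) (hα : 0 < a * s + α) (hβ : 0 < a * N + β) :
    0 < K * p ^ (-a) * Gamma (a * s + α) / (a * N + β) ^ (a * s + α) := by
  have := Gamma_pos_of_pos hα
  positivity

theorem log_normConst (hK : 0 < K) (hp : 0 < p) (hα : 0 < a * s + α) (hβ : 0 < a * N + β) :
    log (K * p ^ (-a) * Gamma (a * s + α) / (a * N + β) ^ (a * s + α))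
      = log K - a * log p + log (Gamma (a * s + α)) - (a * s + α) * log (a * N + β) := by
  have hΓ := Gamma_pos_of_pos hα
  rw [log_div (by positivity) (by positivity), log_mul (by positivity) hΓ.ne',
    log_mul hK.ne' (by positivity), log_rpow hp, log_rpow hβ]
  ring

theorem hasDerivAt_log_normConst {ψ : ℝ} (hψ : HasDerivAt (fun t => log (Gamma t)) ψ (a * s + α))
    (hβ : 0 < a * N + β) :
    HasDerivAt
      (fun b => log K - b * log p + log (Gamma (b * s + α)) - (b * s + α) * log (b * N + β))
      (-log p - N * (a * s + α) / (a * N + β) - s * log (a * N + β) + s * ψ) a := by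
  have hlin : ∀ m c : ℝ, HasDerivAt (fun b : ℝ => b * m + c) m a := fun m c => by
    simpa using ((hasDerivAt_id a).mul_const m).add_const c
  have hlogGamma := hψ.comp a (hlin s α)
  have hlogBase := (hlin N β).log hβ.ne'
  have := (((hasDerivAt_id a).mul_const (log p)).const_sub (log K)).add hlogGamma
  exact (this.sub ((hlin s α).mul hlogBase)).congr_deriv (by field_simp; ring)

end NormalisingConstant

theorem power_prior_poisson_normalising_constant_deriv_general
    (N₀ : ℕ) (s : ℕ) (p' : ℝ) (hp' : 0 < p')
    (α₀ β₀ : ℝ) (hα₀ : 0 < α₀) (hβ₀ : 0 < β₀)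
    (c : ℝ → ℝ)
    (hc : ∀ a : ℝ, c a = (β₀ ^ α₀ / Real.Gamma α₀) * p' ^ (-a)
      * Real.Gamma (a * s + α₀) / (a * N₀ + β₀) ^ (a * s + α₀))
    (ψ₀ : ℝ → ℝ)
    (hψ₀ : ∀ x : ℝ, 0 < x →
      HasDerivAt (fun t : ℝ => Real.log (Real.Gamma t)) (ψ₀ x) x)
    (a₀ : ℝ) (ha₀ : 0 < a₀) :
    HasDerivAt c
      ((-Real.log p' - (N₀ : ℝ) * (α₀ + s * a₀) / (β₀ + N₀ * a₀)
          - s * Real.log (β₀ + N₀ * a₀) + s * ψ₀ (α₀ + s * a₀)) * c a₀)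
      a₀ := by
  have hK : 0 < β₀ ^ α₀ / Gamma α₀ := div_pos (rpow_pos_of_pos hβ₀ _) (Gamma_pos_of_pos hα₀)
  have hα : ∀ a, 0 < a → 0 < a * s + α₀ := fun a ha => by positivity
  have hβ : ∀ a, 0 < a → 0 < a * N₀ + β₀ := fun a ha => by positivity
  have hpos : ∀ᶠ a in 𝓝 a₀, 0 < c a := (eventually_gt_nhds ha₀).mono fun a ha => by
    rw [hc]; exact normConst_pos hK hp' (hα a ha) (hβ a ha)
  have hlog : (fun a => log (c a)) =ᶠ[𝓝 a₀] fun a => log (β₀ ^ α₀ / Gamma α₀) - a * log p'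
      + log (Gamma (a * s + α₀)) - (a * s + α₀) * log (a * N₀ + β₀) :=
    (eventually_gt_nhds ha₀).mono fun a ha => by
      dsimp only; rw [hc]; exact log_normConst hK hp' (hα a ha) (hβ a ha)
  have hderiv := (hasDerivAt_log_normConst (hψ₀ _ (hα a₀ ha₀)) (hβ a₀ ha₀)).congr_of_eventuallyEq
    hlog |>.of_log hpos
  convert hderiv using 2
  rw [show α₀ + s * a₀ = a₀ * s + α₀ by ring, show β₀ + N₀ * a₀ = a₀ * N₀ + β₀ by ring]

/-- Derivative of the Poisson normalising constant (Equation 17): with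
`c a = (β₀^{α₀}/Γ(α₀)) p'^{−a} Γ(a s + α₀) / (a N₀ + β₀)^{a s + α₀}` and `ψ₀`
the digamma function (the derivative of `log ∘ Γ`), for every `a₀ > 0`,
`c` is differentiable at `a₀` with derivative
`(−log p' − N₀(α₀ + s a₀)/(β₀ + N₀ a₀) − s log(β₀ + N₀ a₀) + s ψ₀(α₀ + s a₀)) c(a₀)`. -/
theorem power_prior_poisson_normalising_constant_deriv
    (N₀ : ℕ) (hN₀ : 0 < N₀) (s : ℕ) (p' : ℝ) (hp' : 0 < p')
    (α₀ β₀ : ℝ) (hα₀ : 0 < α₀) (hβ₀ : 0 < β₀)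
    (c : ℝ → ℝ)
    (hc : ∀ a : ℝ, c a = (β₀ ^ α₀ / Real.Gamma α₀) * p' ^ (-a)
      * Real.Gamma (a * s + α₀) / (a * N₀ + β₀) ^ (a * s + α₀))
    (ψ₀ : ℝ → ℝ)
    (hψ₀ : ∀ x : ℝ, 0 < x →
      HasDerivAt (fun t : ℝ => Real.log (Real.Gamma t)) (ψ₀ x) x)
    (a₀ : ℝ) (ha₀ : 0 < a₀) :
    HasDerivAt c
      ((-Real.log p' - (N₀ : ℝ) * (α₀ + s * a₀) / (β₀ + N₀ * a₀)
          - s * Real.log (β₀ + N₀ * a₀) + s * ψ₀ (α₀ + s * a₀)) * c a₀)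
      a₀ :=
  power_prior_poisson_normalising_constant_deriv_general N₀ s p' hp' α₀ β₀ hα₀ hβ₀ c hc ψ₀ hψ₀ a₀
    ha₀
end

section
/- Normalising constant for the Gaussian model with normal-Gamma initial prior (Equation 18): Let N₀ be a positive natural number, y₀₁, …, y₀N₀ ∈ ℝ with mean ȳ = N₀^{−1} Σ y₀ᵢ, let α₀, β₀, κ₀ > 0, μ₀ ∈ ℝ and a₀ ≥ 0. Define αₙ = α₀ + a₀N₀/2, κₙ = κ₀ + a₀N₀, and βₙ = β₀ + (1/2)( a₀ Σ_{i=1}^{N₀} (y₀ᵢ − ȳ)² + κ₀ a₀ N₀ (ȳ − μ₀)²/κₙ ). Then ∫_0^∞ ∫_{−∞}^{∞} ( ∏_{i=1}^{N₀} √(τ/(2π)) e^{−τ (y₀ᵢ−μ)²/2} )^{a₀} · √(κ₀τ/(2π)) e^{−κ₀τ(μ−μ₀)²/2} · (β₀^{α₀}/Γ(α₀)) τ^{α₀−1} e^{−β₀τ} dμ dτ = (Γ(αₙ)/Γ(α₀)) · (β₀^{α₀}/βₙ^{αₙ}) · (κ₀/κₙ)^{1/2} · (2π)^{−a₀N₀/2}.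 -/
/-!
For fixed `τ` the integrand is a Gaussian in `μ`: the sum of squares splits as
`∑ (y₀ᵢ - ȳ)² + N₀ (μ - ȳ)²`, and completing the square merges `a₀ N₀ (μ - ȳ)²` with
`κ₀ (μ - μ₀)²` into `κₙ (μ - m)² + κ₀ a₀ N₀ (ȳ - μ₀)² / κₙ`, where `m = (κ₀ μ₀ + a₀ N₀ ȳ) / κₙ`.
The Gaussian integral in `μ` leaves a constant times `τ ^ (αₙ - 1) * exp (-βₙ τ)`, whose
integral over `τ > 0` is `Γ(αₙ) / βₙ ^ αₙ`.
-/

open MeasureTheory Real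

theorem sum_sub_sq_eq_sum_sub_mean_sq_add {ι : Type*} [Fintype ι] (y : ι → ℝ) (μ : ℝ) :
    ∑ i, (y i - μ) ^ 2 = ∑ i, (y i - (∑ j, y j) / Fintype.card ι) ^ 2
      + Fintype.card ι * (μ - (∑ j, y j) / Fintype.card ι) ^ 2 := by
  set ybar := (∑ j, y j) / Fintype.card ι
  have hsum : ∑ i, y i = Fintype.card ι * ybar := by
    rcases isEmpty_or_nonempty ι with hι | hι
    · simp
    · exact (mul_div_cancel₀ _ (by positivity)).symm
  simp only [sub_sq, Finset.sum_add_distrib, Finset.sum_sub_distrib, ← Finset.sum_mul,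
    ← Finset.mul_sum, Finset.sum_const, Finset.card_univ, nsmul_eq_mul, hsum]
  ring

theorem mul_sub_sq_add_mul_sub_sq {p q : ℝ} (hpq : p + q ≠ 0) (x u v : ℝ) :
    p * (x - u) ^ 2 + q * (x - v) ^ 2
      = (p + q) * (x - (p * u + q * v) / (p + q)) ^ 2 + p * q * (u - v) ^ 2 / (p + q) := by
  field_simp
  ring

theorem prod_sqrt_mul_exp_rpow {ι : Type*} (s : Finset ι) {c : ℝ} (hc : 0 ≤ c) (f : ι → ℝ)
    (a : ℝ) :
    (∏ i ∈ s, √c * exp (f i)) ^ a = c ^ (a * s.card / 2) * exp (a * ∑ i ∈ s, f i) := by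
  rw [Finset.prod_mul_distrib, Finset.prod_const, ← exp_sum,
    mul_rpow (by positivity) (exp_nonneg _), ← exp_mul, sqrt_eq_rpow, ← rpow_natCast,
    ← rpow_mul hc, ← rpow_mul hc, mul_comm a]
  congr 2 <;> ring

theorem integral_exp_neg_mul_sub_sq (b m : ℝ) : ∫ x, exp (-b * (x - m) ^ 2) = √(π / b) := by
  rw [integral_sub_right_eq_self (fun x => exp (-b * x ^ 2)) m, integral_gaussian]

theorem integral_prod_gaussian_rpow_mul_gaussian {ι : Type*} [Fintype ι] (y : ι → ℝ)
    {κ₀ a τ : ℝ} (hκ₀ : 0 < κ₀) (ha : 0 ≤ a) (hτ : 0 < τ) (μ₀ : ℝ)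
    {ybar κn δ : ℝ} (hybar : ybar = (∑ i, y i) / Fintype.card ι)
    (hκn : κn = κ₀ + a * Fintype.card ι)
    (hδ : δ = (a * ∑ i, (y i - ybar) ^ 2
      + κ₀ * a * Fintype.card ι * (ybar - μ₀) ^ 2 / κn) / 2) :
    ∫ μ, (∏ i, √(τ / (2 * π)) * exp (-τ * (y i - μ) ^ 2 / 2)) ^ a
        * (√(κ₀ * τ / (2 * π)) * exp (-κ₀ * τ * (μ - μ₀) ^ 2 / 2))
      = (κ₀ / κn) ^ ((1 : ℝ) / 2) * (2 * π) ^ (-(a * Fintype.card ι) / 2)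
          * τ ^ (a * Fintype.card ι / 2) * exp (-(δ * τ)) := by
  set n : ℝ := (Fintype.card ι : ℝ)
  have hκn_pos : 0 < κn := by rw [hκn]; positivity
  set m := (κ₀ * μ₀ + a * n * ybar) / κn with hm
  have hexponent (μ : ℝ) : a * ∑ i, -τ * (y i - μ) ^ 2 / 2 + -κ₀ * τ * (μ - μ₀) ^ 2 / 2
      = -(κn * τ / 2) * (μ - m) ^ 2 - δ * τ := by
    have hsum : ∑ i, -τ * (y i - μ) ^ 2 / 2 = -τ / 2 * ∑ i, (y i - μ) ^ 2 := by
      rw [Finset.mul_sum]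
      exact Finset.sum_congr rfl fun _ _ => by ring
    have hsplit := sum_sub_sq_eq_sum_sub_mean_sq_add y μ
    have hsquare :=
      mul_sub_sq_add_mul_sub_sq (p := κ₀) (q := a * n) (hκn ▸ hκn_pos.ne') μ μ₀ ybar
    rw [← hybar] at hsplit
    rw [← hκn] at hsquare
    rw [hsum, hsplit, hδ, hm]
    linear_combination (-(τ / 2)) * hsquare
  have hpoint (μ : ℝ) : (∏ i, √(τ / (2 * π)) * exp (-τ * (y i - μ) ^ 2 / 2)) ^ a
      * (√(κ₀ * τ / (2 * π)) * exp (-κ₀ * τ * (μ - μ₀) ^ 2 / 2))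
      = (τ / (2 * π)) ^ (a * n / 2) * √(κ₀ * τ / (2 * π)) * exp (-(δ * τ))
        * exp (-(κn * τ / 2) * (μ - m) ^ 2) := by
    rw [prod_sqrt_mul_exp_rpow _ (by positivity) (fun i => -τ * (y i - μ) ^ 2 / 2),
      Finset.card_univ]
    calc _ = (τ / (2 * π)) ^ (a * n / 2) * √(κ₀ * τ / (2 * π))
          * exp (a * ∑ i, -τ * (y i - μ) ^ 2 / 2 + -κ₀ * τ * (μ - μ₀) ^ 2 / 2) := by
          rw [exp_add]; ring
      _ = _ := by rw [hexponent, sub_eq_add_neg, exp_add]; ring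
  have hsqrt : √(κ₀ * τ / (2 * π)) * √(π / (κn * τ / 2)) = (κ₀ / κn) ^ ((1 : ℝ) / 2) := by
    rw [← sqrt_mul (by positivity), sqrt_eq_rpow]
    congr 1
    field_simp
  simp_rw [hpoint]
  rw [integral_const_mul, integral_exp_neg_mul_sub_sq, div_rpow hτ.le (by positivity),
    ← hsqrt, neg_div, rpow_neg (by positivity)]
  ring

theorem power_prior_gaussian_normalising_constant_general
    (N₀ : ℕ) (y : Fin N₀ → ℝ)
    (α₀ β₀ κ₀ : ℝ) (hα₀ : 0 < α₀) (hβ₀ : 0 < β₀) (hκ₀ : 0 < κ₀)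
    (μ₀ : ℝ) (a₀ : ℝ) (ha₀ : 0 ≤ a₀)
    (ybar : ℝ) (hybar : ybar = (∑ i, y i) / (N₀ : ℝ))
    (αn κn βn : ℝ)
    (hαn : αn = α₀ + a₀ * N₀ / 2)
    (hκn : κn = κ₀ + a₀ * N₀)
    (hβn : βn = β₀ + (a₀ * ∑ i, (y i - ybar) ^ 2
      + κ₀ * a₀ * N₀ * (ybar - μ₀) ^ 2 / κn) / 2) :
    ∫ τ in Set.Ioi (0 : ℝ), ∫ μ : ℝ,
        (∏ i, Real.sqrt (τ / (2 * π)) * Real.exp (-τ * (y i - μ) ^ 2 / 2)) ^ a₀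
          * (Real.sqrt (κ₀ * τ / (2 * π))
              * Real.exp (-κ₀ * τ * (μ - μ₀) ^ 2 / 2))
          * ((β₀ ^ α₀ / Real.Gamma α₀) * τ ^ (α₀ - 1) * Real.exp (-β₀ * τ))
      = (Real.Gamma αn / Real.Gamma α₀) * (β₀ ^ α₀ / βn ^ αn)
          * (κ₀ / κn) ^ ((1 : ℝ) / 2)
          * (2 * π) ^ (-(a₀ * N₀) / 2) := by
  set δ := (a₀ * ∑ i, (y i - ybar) ^ 2 + κ₀ * a₀ * N₀ * (ybar - μ₀) ^ 2 / κn) / 2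
  have hκn_pos : 0 < κn := by rw [hκn]; positivity
  have hαn_pos : 0 < αn := by rw [hαn]; positivity
  have hβn_pos : 0 < βn := by rw [hβn]; positivity
  have hinner : ∀ τ ∈ Set.Ioi (0 : ℝ), ∫ μ : ℝ,
      (∏ i, √(τ / (2 * π)) * exp (-τ * (y i - μ) ^ 2 / 2)) ^ a₀
        * (√(κ₀ * τ / (2 * π)) * exp (-κ₀ * τ * (μ - μ₀) ^ 2 / 2))
        * ((β₀ ^ α₀ / Gamma α₀) * τ ^ (α₀ - 1) * exp (-β₀ * τ))
      = (κ₀ / κn) ^ ((1 : ℝ) / 2) * (2 * π) ^ (-(a₀ * N₀) / 2) * (β₀ ^ α₀ / Gamma α₀)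
        * (τ ^ (αn - 1) * exp (-(βn * τ))) := fun τ hτ => by
    have hmarginal := integral_prod_gaussian_rpow_mul_gaussian y hκ₀ ha₀ hτ μ₀ (ybar := ybar)
      (κn := κn) (δ := δ) (by rwa [Fintype.card_fin]) (by rwa [Fintype.card_fin])
      (by rw [Fintype.card_fin])
    rw [Fintype.card_fin] at hmarginal
    rw [integral_mul_const, hmarginal, hαn, hβn,
      show α₀ + a₀ * N₀ / 2 - 1 = a₀ * N₀ / 2 + (α₀ - 1) by ring, rpow_add hτ,
      show -((β₀ + δ) * τ) = -(δ * τ) + -β₀ * τ by ring, exp_add]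
    ring
  rw [setIntegral_congr_fun measurableSet_Ioi hinner, integral_const_mul,
    integral_rpow_mul_exp_neg_mul_Ioi hαn_pos hβn_pos, div_rpow zero_le_one hβn_pos.le, one_rpow]
  field_simp

/-- Normalising constant for the Gaussian model with normal-Gamma initial prior
(Equation 18): with `ȳ` the sample mean, `αₙ = α₀ + a₀N₀/2`, `κₙ = κ₀ + a₀N₀`,
`βₙ = β₀ + (a₀ Σᵢ (y₀ᵢ − ȳ)² + κ₀ a₀ N₀ (ȳ − μ₀)²/κₙ)/2`, the double integral
of the tempered Gaussian likelihood against the normal-Gamma prior equals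
`(Γ(αₙ)/Γ(α₀)) (β₀^{α₀}/βₙ^{αₙ}) (κ₀/κₙ)^{1/2} (2π)^{−a₀N₀/2}`. -/
theorem power_prior_gaussian_normalising_constant
    (N₀ : ℕ) (hN₀ : 0 < N₀) (y : Fin N₀ → ℝ)
    (α₀ β₀ κ₀ : ℝ) (hα₀ : 0 < α₀) (hβ₀ : 0 < β₀) (hκ₀ : 0 < κ₀)
    (μ₀ : ℝ) (a₀ : ℝ) (ha₀ : 0 ≤ a₀)
    (ybar : ℝ) (hybar : ybar = (∑ i, y i) / (N₀ : ℝ))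
    (αn κn βn : ℝ)
    (hαn : αn = α₀ + a₀ * N₀ / 2)
    (hκn : κn = κ₀ + a₀ * N₀)
    (hβn : βn = β₀ + (a₀ * ∑ i, (y i - ybar) ^ 2
      + κ₀ * a₀ * N₀ * (ybar - μ₀) ^ 2 / κn) / 2) :
    ∫ τ in Set.Ioi (0 : ℝ), ∫ μ : ℝ,
        (∏ i, Real.sqrt (τ / (2 * π)) * Real.exp (-τ * (y i - μ) ^ 2 / 2)) ^ a₀
          * (Real.sqrt (κ₀ * τ / (2 * π))
              * Real.exp (-κ₀ * τ * (μ - μ₀) ^ 2 / 2))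
          * ((β₀ ^ α₀ / Real.Gamma α₀) * τ ^ (α₀ - 1) * Real.exp (-β₀ * τ))
      = (Real.Gamma αn / Real.Gamma α₀) * (β₀ ^ α₀ / βn ^ αn)
          * (κ₀ / κn) ^ ((1 : ℝ) / 2)
          * (2 * π) ^ (-(a₀ * N₀) / 2) :=
  power_prior_gaussian_normalising_constant_general N₀ y α₀ β₀ κ₀ hα₀ hβ₀ hκ₀ μ₀ a₀ ha₀ ybar hybar
    αn κn βn hαn hκn hβn
end

section
/- Normalising constant for Bayesian linear regression with a normal inverse-Gamma prior (Equation 20): Let N₀ and P be positive natural numbers, X₀ an N₀ × P real matrix, y₀ ∈ ℝ^{N₀}, Λ₀ a symmetric positive-definite P × P real matrix, μ₀ ∈ ℝ^P, α₀, γ₀ > 0 and a₀ ≥ 0. Put X⋆ = √a₀ · X₀, y⋆ = √a₀ · y₀, Λₙ = X⋆ᵀX⋆ + Λ₀ (which is positive definite), μₙ = Λₙ^{−1}(Λ₀μ₀ + X⋆ᵀy⋆), αₙ = α₀ + a₀N₀/2, and γₙ = γ₀ + (1/2)(y⋆ᵀy⋆ + μ₀ᵀΛ₀μ₀ − μₙᵀΛₙμₙ).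 Then ∫_0^∞ ∫_{ℝ^P} ( ∏_{i=1}^{N₀} (2πσ²)^{−1/2} e^{−(y₀ᵢ − X₀ᵢᵀβ)²/(2σ²)} )^{a₀} · (2πσ²)^{−P/2} √(det Λ₀) · e^{−(β−μ₀)ᵀΛ₀(β−μ₀)/(2σ²)} · (γ₀^{α₀}/Γ(α₀)) (σ²)^{−α₀−1} e^{−γ₀/σ²} dβ d(σ²) = √(det Λ₀ / det Λₙ) · (γ₀^{α₀}/γₙ^{αₙ}) · (Γ(αₙ)/Γ(α₀)) · (2π)^{−a₀N₀/2}. -/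
/-!
For fixed `σ² = s`, completing the square in `β`,
`‖y⋆ - X⋆β‖² + (β - μ₀)ᵀΛ₀(β - μ₀) = (β - μₙ)ᵀΛₙ(β - μₙ) + 2(γₙ - γ₀)`,
turns the integrand into a constant multiple of the product of the `N(μₙ, s Λₙ⁻¹)` density in `β`
and the Inverse-Gamma`(αₙ, γₙ)` density in `s`. Both densities integrate to one, so the double
integral is that constant. The multivariate Gaussian integral reduces to the one-dimensional one
through the change of variables `x ↦ Bx`, where `Λ = BᵀB`.
-/

open MeasureTheory Matrix Real

namespace Matrix

variable {κ ι : Type*} [Fintype κ] [Fintype ι]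

lemma integral_exp_neg_dotProduct_self :
    ∫ x : ι → ℝ, exp (-(x ⬝ᵥ x)) = √π ^ Fintype.card ι := by
  have hprod (x : ι → ℝ) : exp (-(x ⬝ᵥ x)) = ∏ i, exp (-x i ^ 2) := by
    simp [dotProduct, ← Real.exp_sum, sq]
  simp_rw [hprod]
  rw [volume_pi, integral_fintype_prod_eq_pow (fun t : ℝ => exp (-t ^ 2))]
  simpa using congrArg (· ^ Fintype.card ι) (integral_gaussian 1)

lemma dotProduct_sub_mulVec_sub {M : Matrix ι ι ℝ} (hM : M.IsSymm) (x c : ι → ℝ) :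
    (x - c) ⬝ᵥ (M *ᵥ (x - c)) = x ⬝ᵥ (M *ᵥ x) - 2 * (x ⬝ᵥ (M *ᵥ c)) + c ⬝ᵥ (M *ᵥ c) := by
  have hsymm : c ⬝ᵥ (M *ᵥ x) = x ⬝ᵥ (M *ᵥ c) := by
    rw [dotProduct_mulVec, ← mulVec_transpose, hM.eq, dotProduct_comm]
  rw [mulVec_sub, dotProduct_sub, sub_dotProduct, sub_dotProduct, hsymm]
  ring

lemma dotProduct_self_sub_mulVec (X : Matrix κ ι ℝ) (y : κ → ℝ) (β : ι → ℝ) :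
    (y - X *ᵥ β) ⬝ᵥ (y - X *ᵥ β) = y ⬝ᵥ y - 2 * (β ⬝ᵥ (Xᵀ *ᵥ y)) + β ⬝ᵥ ((Xᵀ * X) *ᵥ β) := by
  rw [dotProduct_sub, sub_dotProduct, sub_dotProduct, ← mulVec_mulVec, dotProduct_mulVec β Xᵀ,
    vecMul_transpose, dotProduct_mulVec β Xᵀ, vecMul_transpose, dotProduct_comm (X *ᵥ β) y]
  ring

variable [DecidableEq ι]

open scoped MatrixOrder in
lemma PosDef.integral_exp_neg_dotProduct_mulVec {A : Matrix ι ι ℝ} (hA : A.PosDef) :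
    ∫ x : ι → ℝ, exp (-(x ⬝ᵥ (A *ᵥ x))) = √(π ^ Fintype.card ι / A.det) := by
  obtain ⟨B, rfl⟩ := CStarAlgebra.nonneg_iff_eq_star_mul_self.mp hA.posSemidef.nonneg
  have hdet : (star B * B).det = B.det ^ 2 := by
    rw [det_mul, star_eq_conjTranspose, det_conjTranspose, star_trivial, sq]
  have hB : B.det ≠ 0 := fun h => by simpa [hdet, h] using hA.det_pos
  have hquad (x : ι → ℝ) : x ⬝ᵥ ((star B * B) *ᵥ x) = toLin' B x ⬝ᵥ toLin' B x := by
    rw [← mulVec_mulVec, dotProduct_mulVec, star_eq_conjTranspose,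
      conjTranspose_eq_transpose_of_trivial, vecMul_transpose, dotProduct_comm]
    rfl
  have hsqrt : √(π ^ Fintype.card ι) = √π ^ Fintype.card ι := by
    rw [← Real.sqrt_sq (by positivity : 0 ≤ √π ^ Fintype.card ι), ← pow_mul, mul_comm,
      pow_mul, Real.sq_sqrt pi_nonneg]
  have hmeas : Measurable (toLin' B) := (toLin' B).continuous_of_finiteDimensional.measurable
  calc ∫ x : ι → ℝ, exp (-(x ⬝ᵥ ((star B * B) *ᵥ x)))
      = ∫ y, exp (-(y ⬝ᵥ y)) ∂(Measure.map (toLin' B) volume) := by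
        simp_rw [hquad]
        refine (integral_map (f := fun y : ι → ℝ => exp (-(y ⬝ᵥ y))) hmeas.aemeasurable
          (Continuous.aestronglyMeasurable ?_)).symm
        fun_prop
    _ = |B.det|⁻¹ * √π ^ Fintype.card ι := by
        rw [Real.map_matrix_volume_pi_eq_smul_volume_pi hB, integral_smul_measure,
          ENNReal.toReal_ofReal (abs_nonneg _), abs_inv, smul_eq_mul,
          integral_exp_neg_dotProduct_self]
    _ = √(π ^ Fintype.card ι / (star B * B).det) := by
        rw [hdet, Real.sqrt_div' _ (sq_nonneg _), Real.sqrt_sq_eq_abs, hsqrt, inv_mul_eq_div]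

lemma PosDef.integral_exp_neg_dotProduct_mulVec_sub_div {M : Matrix ι ι ℝ} (hM : M.PosDef)
    (c : ι → ℝ) {t : ℝ} (ht : 0 < t) :
    ∫ x : ι → ℝ, exp (-((x - c) ⬝ᵥ (M *ᵥ (x - c))) / (2 * t))
      = √((2 * π * t) ^ Fintype.card ι / M.det) := by
  have hscale (v : ι → ℝ) : -(v ⬝ᵥ (M *ᵥ v)) / (2 * t) = -(v ⬝ᵥ ((2 * t)⁻¹ • M) *ᵥ v) := by
    rw [smul_mulVec, dotProduct_smul, smul_eq_mul]
    ring
  simp_rw [hscale]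
  rw [integral_sub_right_eq_self (fun x => exp (-(x ⬝ᵥ ((2 * t)⁻¹ • M) *ᵥ x))) c,
    (hM.smul (by positivity)).integral_exp_neg_dotProduct_mulVec, det_smul,
    show (2 * π * t) ^ Fintype.card ι = π ^ Fintype.card ι * (2 * t) ^ Fintype.card ι by ring,
    inv_pow, inv_mul_eq_div, div_div_eq_mul_div]

end Matrix

/-- The density at `x` of the normal distribution with mean `c` and covariance `t • M⁻¹`. -/
noncomputable def normalDensity {ι : Type*} [Fintype ι] [DecidableEq ι] (c : ι → ℝ)
    (M : Matrix ι ι ℝ) (t : ℝ) (x : ι → ℝ) : ℝ :=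
  (2 * π * t) ^ (-(Fintype.card ι : ℝ) / 2) * √M.det
    * exp (-((x - c) ⬝ᵥ (M *ᵥ (x - c))) / (2 * t))

noncomputable def invGammaDensity (α γ s : ℝ) : ℝ :=
  γ ^ α / Gamma α * s ^ (-α - 1) * exp (-γ / s)

lemma Matrix.PosDef.integral_normalDensity {ι : Type*} [Fintype ι] [DecidableEq ι]
    {M : Matrix ι ι ℝ} (hM : M.PosDef) (c : ι → ℝ) {t : ℝ} (ht : 0 < t) :
    ∫ x, normalDensity c M t x = 1 := by
  have hu : 0 < 2 * π * t := by positivity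
  have hsqrt : √((2 * π * t) ^ Fintype.card ι) = (2 * π * t) ^ ((Fintype.card ι : ℝ) / 2) := by
    rw [Real.sqrt_eq_rpow, ← Real.rpow_natCast, ← Real.rpow_mul hu.le]
    ring_nf
  have hsqrt_det : √M.det ≠ 0 := by positivity [hM.det_pos]
  simp only [normalDensity]
  rw [integral_const_mul, hM.integral_exp_neg_dotProduct_mulVec_sub_div c ht,
    Real.sqrt_div' _ hM.det_pos.le, hsqrt]
  field_simp
  rw [← Real.rpow_add hu]
  simp

lemma integral_Ioi_rpow_mul_exp_neg_div {α γ : ℝ} (hα : 0 < α) (hγ : 0 < γ) :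
    ∫ s in Set.Ioi (0 : ℝ), s ^ (-α - 1) * exp (-γ / s) = Gamma α / γ ^ α := by
  rw [← integral_comp_rpow_Ioi _ (p := -1) (by norm_num)]
  have hsubst : Set.EqOn
      (fun x : ℝ => (|(-1 : ℝ)| * x ^ ((-1 : ℝ) - 1)) •
        ((x ^ (-1 : ℝ)) ^ (-α - 1) * exp (-γ / x ^ (-1 : ℝ))))
      (fun x : ℝ => x ^ (α - 1) * exp (-γ * x ^ (1 : ℝ))) (Set.Ioi 0) := by
    intro x (hx : 0 < x)
    simp only [abs_neg, abs_one, one_mul, smul_eq_mul, Real.rpow_one]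
    rw [Real.rpow_neg_one, Real.inv_rpow hx.le, ← Real.rpow_neg hx.le, div_inv_eq_mul,
      ← mul_assoc, ← Real.rpow_add hx]
    ring_nf
  rw [setIntegral_congr_fun measurableSet_Ioi hsubst,
    integral_rpow_mul_exp_neg_mul_rpow one_pos (by linarith) hγ]
  simp [Real.rpow_neg hγ.le, div_eq_inv_mul]

lemma integral_invGammaDensity {α γ : ℝ} (hα : 0 < α) (hγ : 0 < γ) :
    ∫ s in Set.Ioi (0 : ℝ), invGammaDensity α γ s = 1 := by
  have := (Gamma_pos_of_pos hα).ne'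
  have := (rpow_pos_of_pos hγ α).ne'
  simp only [invGammaDensity, mul_assoc]
  rw [integral_const_mul, integral_Ioi_rpow_mul_exp_neg_div hα hγ]
  field_simp

lemma invGammaDensity_mul_rpow_mul_exp {α γ α' γ' s : ℝ} (hs : 0 < s) (hα' : Gamma α' ≠ 0)
    (hγ' : 0 < γ') :
    invGammaDensity α γ s * (s ^ (α - α') * exp ((γ - γ') / s))
      = γ ^ α / γ' ^ α' * (Gamma α' / Gamma α) * invGammaDensity α' γ' s := by
  have hpow : s ^ (-α - 1) * s ^ (α - α') = s ^ (-α' - 1) := by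
    rw [← rpow_add hs]
    ring_nf
  have hexp : exp (-γ / s) * exp ((γ - γ') / s) = exp (-γ' / s) := by
    rw [← exp_add]
    ring_nf
  have := (rpow_pos_of_pos hγ' α').ne'
  calc invGammaDensity α γ s * (s ^ (α - α') * exp ((γ - γ') / s))
      = γ ^ α / Gamma α * (s ^ (-α - 1) * s ^ (α - α'))
          * (exp (-γ / s) * exp ((γ - γ') / s)) := by
        simp only [invGammaDensity]
        ring
    _ = _ := by
        rw [hpow, hexp, invGammaDensity]
        field_simp

section Regression

variable {κ ι : Type*} [Fintype κ] [Fintype ι]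

lemma residual_add_prior_quadratic_eq {X : Matrix κ ι ℝ} {y : κ → ℝ} {Λ₀ Λn : Matrix ι ι ℝ}
    {μ₀ μn : ι → ℝ} (hΛ₀ : Λ₀.IsSymm) (hΛn : Λn = Xᵀ * X + Λ₀)
    (hμn : Λn *ᵥ μn = Λ₀ *ᵥ μ₀ + Xᵀ *ᵥ y) (β : ι → ℝ) :
    (y - X *ᵥ β) ⬝ᵥ (y - X *ᵥ β) + (β - μ₀) ⬝ᵥ (Λ₀ *ᵥ (β - μ₀))
      = (β - μn) ⬝ᵥ (Λn *ᵥ (β - μn)) + (y ⬝ᵥ y + μ₀ ⬝ᵥ (Λ₀ *ᵥ μ₀) - μn ⬝ᵥ (Λn *ᵥ μn)) := by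
  have hΛn_symm : Λn.IsSymm := by
    rw [hΛn, IsSymm, transpose_add, transpose_mul, transpose_transpose, hΛ₀.eq]
  have hlin : β ⬝ᵥ (Λn *ᵥ μn) = β ⬝ᵥ (Λ₀ *ᵥ μ₀) + β ⬝ᵥ (Xᵀ *ᵥ y) := by
    rw [hμn, dotProduct_add]
  have hquad : β ⬝ᵥ (Λn *ᵥ β) = β ⬝ᵥ ((Xᵀ * X) *ᵥ β) + β ⬝ᵥ (Λ₀ *ᵥ β) := by
    rw [hΛn, add_mulVec, dotProduct_add]
  rw [dotProduct_self_sub_mulVec, dotProduct_sub_mulVec_sub hΛ₀,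
    dotProduct_sub_mulVec_sub hΛn_symm, hlin, hquad]
  ring

lemma posterior_remainder_nonneg {X : Matrix κ ι ℝ} {y : κ → ℝ} {Λ₀ Λn : Matrix ι ι ℝ}
    {μ₀ μn : ι → ℝ} (hΛ₀ : Λ₀.PosSemidef) (hΛn : Λn = Xᵀ * X + Λ₀)
    (hμn : Λn *ᵥ μn = Λ₀ *ᵥ μ₀ + Xᵀ *ᵥ y) :
    0 ≤ y ⬝ᵥ y + μ₀ ⬝ᵥ (Λ₀ *ᵥ μ₀) - μn ⬝ᵥ (Λn *ᵥ μn) := by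
  have h := residual_add_prior_quadratic_eq (isHermitian_iff_isSymm.mp hΛ₀.isHermitian) hΛn hμn μn
  have hres : 0 ≤ (y - X *ᵥ μn) ⬝ᵥ (y - X *ᵥ μn) :=
    Finset.sum_nonneg fun i _ => mul_self_nonneg _
  have hprior : 0 ≤ (μn - μ₀) ⬝ᵥ (Λ₀ *ᵥ (μn - μ₀)) := by
    simpa using hΛ₀.dotProduct_mulVec_nonneg (μn - μ₀)
  simp only [sub_self, mulVec_zero, dotProduct_zero, zero_add] at h
  linarith

lemma dotProduct_self_sub_mulVec_sqrt_smul {a : ℝ} (ha : 0 ≤ a) (X : Matrix κ ι ℝ) (y : κ → ℝ)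
    (β : ι → ℝ) :
    (√a • y - (√a • X) *ᵥ β) ⬝ᵥ (√a • y - (√a • X) *ᵥ β)
      = a * ((y - X *ᵥ β) ⬝ᵥ (y - X *ᵥ β)) := by
  rw [smul_mulVec, ← smul_sub, smul_dotProduct, dotProduct_smul, smul_eq_mul, smul_eq_mul,
    ← mul_assoc, Real.mul_self_sqrt ha]

lemma gaussian_likelihood_rpow (X : Matrix κ ι ℝ) (y : κ → ℝ) (β : ι → ℝ) {s : ℝ} (hs : 0 ≤ s)
    (a : ℝ) :
    (∏ i, (2 * π * s) ^ (-(1 : ℝ) / 2) * exp (-(y i - X i ⬝ᵥ β) ^ 2 / (2 * s))) ^ a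
      = (2 * π * s) ^ (-(a * Fintype.card κ) / 2)
        * exp (-(a * ((y - X *ᵥ β) ⬝ᵥ (y - X *ᵥ β))) / (2 * s)) := by
  have hu : 0 ≤ 2 * π * s := by positivity
  have hsum : -((y - X *ᵥ β) ⬝ᵥ (y - X *ᵥ β)) / (2 * s)
      = ∑ i, -(y i - X i ⬝ᵥ β) ^ 2 / (2 * s) := by
    simp only [dotProduct, Pi.sub_apply, mulVec, ← sq, neg_div, ← Finset.sum_div,
      Finset.sum_neg_distrib]
  rw [Finset.prod_mul_distrib, Finset.prod_const, Finset.card_univ, ← Real.exp_sum, ← hsum,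
    Real.mul_rpow (by positivity) (Real.exp_nonneg _), ← Real.rpow_natCast,
    ← Real.rpow_mul hu, ← Real.rpow_mul hu, ← Real.exp_mul]
  congr 2 <;> ring

variable [DecidableEq ι]

lemma exp_neg_residual_mul_normalDensity {X : Matrix κ ι ℝ} {y : κ → ℝ} {Λ₀ Λn : Matrix ι ι ℝ}
    {μ₀ μn : ι → ℝ} (hΛ₀ : Λ₀.IsSymm) (hΛn : Λn = Xᵀ * X + Λ₀)
    (hμn : Λn *ᵥ μn = Λ₀ *ᵥ μ₀ + Xᵀ *ᵥ y) (hdet : 0 < Λn.det) (t : ℝ) (β : ι → ℝ) :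
    exp (-((y - X *ᵥ β) ⬝ᵥ (y - X *ᵥ β)) / (2 * t)) * normalDensity μ₀ Λ₀ t β
      = √(Λ₀.det / Λn.det) * exp (-(y ⬝ᵥ y + μ₀ ⬝ᵥ (Λ₀ *ᵥ μ₀) - μn ⬝ᵥ (Λn *ᵥ μn)) / (2 * t))
        * normalDensity μn Λn t β := by
  have hexp : exp (-((y - X *ᵥ β) ⬝ᵥ (y - X *ᵥ β)) / (2 * t))
        * exp (-((β - μ₀) ⬝ᵥ (Λ₀ *ᵥ (β - μ₀))) / (2 * t))
      = exp (-(y ⬝ᵥ y + μ₀ ⬝ᵥ (Λ₀ *ᵥ μ₀) - μn ⬝ᵥ (Λn *ᵥ μn)) / (2 * t))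
        * exp (-((β - μn) ⬝ᵥ (Λn *ᵥ (β - μn))) / (2 * t)) := by
    rw [← exp_add, ← exp_add]
    congr 1
    linear_combination (-1 / (2 * t)) * residual_add_prior_quadratic_eq hΛ₀ hΛn hμn β
  have hsqrt : √Λ₀.det / √Λn.det * √Λn.det = √Λ₀.det := div_mul_cancel₀ _ (by positivity)
  simp only [normalDensity]
  rw [Real.sqrt_div' _ hdet.le]
  linear_combination (2 * π * t) ^ (-(Fintype.card ι : ℝ) / 2) * √Λ₀.det * hexp
    - (2 * π * t) ^ (-(Fintype.card ι : ℝ) / 2)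
      * exp (-(y ⬝ᵥ y + μ₀ ⬝ᵥ (Λ₀ *ᵥ μ₀) - μn ⬝ᵥ (Λn *ᵥ μn)) / (2 * t))
      * exp (-((β - μn) ⬝ᵥ (Λn *ᵥ (β - μn))) / (2 * t)) * hsqrt

lemma likelihood_rpow_mul_prior_eq_posterior (X₀ : Matrix κ ι ℝ) (y₀ : κ → ℝ)
    {Λ₀ Λn : Matrix ι ι ℝ} {μ₀ μn : ι → ℝ} {α₀ γ₀ a₀ αn γn s : ℝ} {Xs : Matrix κ ι ℝ}
    {ys : κ → ℝ} (ha₀ : 0 ≤ a₀) (hXs : Xs = √a₀ • X₀) (hys : ys = √a₀ • y₀)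
    (hΛ₀ : Λ₀.IsSymm) (hΛn : Λn = Xsᵀ * Xs + Λ₀) (hdet : 0 < Λn.det)
    (hμn : Λn *ᵥ μn = Λ₀ *ᵥ μ₀ + Xsᵀ *ᵥ ys)
    (hαn : αn = α₀ + a₀ * Fintype.card κ / 2) (hΓ : Gamma αn ≠ 0)
    (hγn : γn = γ₀ + (ys ⬝ᵥ ys + μ₀ ⬝ᵥ (Λ₀ *ᵥ μ₀) - μn ⬝ᵥ (Λn *ᵥ μn)) / 2) (hγn_pos : 0 < γn)
    (hs : 0 < s) (β : ι → ℝ) :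
    (∏ i, (2 * π * s) ^ (-(1 : ℝ) / 2) * exp (-(y₀ i - X₀ i ⬝ᵥ β) ^ 2 / (2 * s))) ^ a₀
        * normalDensity μ₀ Λ₀ s β * invGammaDensity α₀ γ₀ s
      = √(Λ₀.det / Λn.det) * (γ₀ ^ α₀ / γn ^ αn) * (Gamma αn / Gamma α₀)
          * (2 * π) ^ (-(a₀ * Fintype.card κ) / 2) * invGammaDensity αn γn s
          * normalDensity μn Λn s β := by
  have hconj := exp_neg_residual_mul_normalDensity hΛ₀ hΛn hμn hdet s β
  have hIG := invGammaDensity_mul_rpow_mul_exp (α := α₀) (γ := γ₀) hs hΓ hγn_pos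
  have hscale : (2 * π * s) ^ (-(a₀ * Fintype.card κ) / 2)
      = (2 * π) ^ (-(a₀ * Fintype.card κ) / 2) * s ^ (α₀ - αn) := by
    rw [mul_rpow (by positivity) hs.le, hαn]
    ring_nf
  have hremainder : -(ys ⬝ᵥ ys + μ₀ ⬝ᵥ (Λ₀ *ᵥ μ₀) - μn ⬝ᵥ (Λn *ᵥ μn)) / (2 * s)
      = (γ₀ - γn) / s := by
    rw [hγn]
    field_simp
    ring
  rw [hremainder] at hconj
  rw [gaussian_likelihood_rpow X₀ y₀ β hs.le, ← dotProduct_self_sub_mulVec_sqrt_smul ha₀, ← hXs,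
    ← hys, hscale]
  linear_combination (2 * π) ^ (-(a₀ * Fintype.card κ) / 2) * s ^ (α₀ - αn)
      * invGammaDensity α₀ γ₀ s * hconj
    + (2 * π) ^ (-(a₀ * Fintype.card κ) / 2) * √(Λ₀.det / Λn.det) * normalDensity μn Λn s β * hIG

end Regression

theorem power_prior_linear_regression_normalising_constant_general
    (N₀ P : ℕ)
    (X₀ : Matrix (Fin N₀) (Fin P) ℝ) (y₀ : Fin N₀ → ℝ)
    (Λ₀ : Matrix (Fin P) (Fin P) ℝ) (hΛ₀ : Λ₀.PosDef)
    (μ₀ : Fin P → ℝ) (α₀ γ₀ : ℝ) (hα₀ : 0 < α₀) (hγ₀ : 0 < γ₀)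
    (a₀ : ℝ) (ha₀ : 0 ≤ a₀)
    (Xs : Matrix (Fin N₀) (Fin P) ℝ) (hXs : Xs = Real.sqrt a₀ • X₀)
    (ys : Fin N₀ → ℝ) (hys : ys = Real.sqrt a₀ • y₀)
    (Λn : Matrix (Fin P) (Fin P) ℝ) (hΛn : Λn = Xsᵀ * Xs + Λ₀)
    (μn : Fin P → ℝ) (hμn : μn = Λn⁻¹ *ᵥ (Λ₀ *ᵥ μ₀ + Xsᵀ *ᵥ ys))
    (αn : ℝ) (hαn : αn = α₀ + a₀ * N₀ / 2)
    (γn : ℝ)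
    (hγn : γn = γ₀ + (ys ⬝ᵥ ys + μ₀ ⬝ᵥ (Λ₀ *ᵥ μ₀) - μn ⬝ᵥ (Λn *ᵥ μn)) / 2) :
    Λn.PosDef ∧
    ∫ s in Set.Ioi (0 : ℝ), ∫ β : Fin P → ℝ,
        (∏ i, (2 * π * s) ^ (-(1 : ℝ) / 2)
            * Real.exp (-(y₀ i - X₀ i ⬝ᵥ β) ^ 2 / (2 * s))) ^ a₀
          * ((2 * π * s) ^ (-(P : ℝ) / 2) * Real.sqrt Λ₀.det
              * Real.exp (-((β - μ₀) ⬝ᵥ (Λ₀ *ᵥ (β - μ₀))) / (2 * s)))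
          * ((γ₀ ^ α₀ / Real.Gamma α₀) * s ^ (-α₀ - 1)
              * Real.exp (-γ₀ / s))
      = Real.sqrt (Λ₀.det / Λn.det) * (γ₀ ^ α₀ / γn ^ αn)
          * (Real.Gamma αn / Real.Gamma α₀)
          * (2 * π) ^ (-(a₀ * N₀) / 2) := by
  have hΛn_pd : Λn.PosDef := by
    rw [hΛn, ← conjTranspose_eq_transpose_of_trivial]
    exact hΛ₀.posSemidef_add (posSemidef_conjTranspose_mul_self Xs)
  have hμn' : Λn *ᵥ μn = Λ₀ *ᵥ μ₀ + Xsᵀ *ᵥ ys := by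
    rw [hμn, mulVec_mulVec, mul_nonsing_inv _ hΛn_pd.det_pos.ne'.isUnit, one_mulVec]
  have hγn_pos : 0 < γn := by
    rw [hγn]
    positivity [posterior_remainder_nonneg hΛ₀.posSemidef hΛn hμn']
  have hαn_pos : 0 < αn := by rw [hαn]; positivity
  have hfactor (s : ℝ) (hs : 0 < s) := likelihood_rpow_mul_prior_eq_posterior X₀ y₀ ha₀ hXs hys
    (isHermitian_iff_isSymm.mp hΛ₀.isHermitian) hΛn hΛn_pd.det_pos hμn'
    (by rwa [Fintype.card_fin]) (Gamma_pos_of_pos hαn_pos).ne' hγn hγn_pos hs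
  refine ⟨hΛn_pd, ?_⟩
  calc _ = ∫ s in Set.Ioi (0 : ℝ), ∫ β : Fin P → ℝ,
          (∏ i, (2 * π * s) ^ (-(1 : ℝ) / 2) * exp (-(y₀ i - X₀ i ⬝ᵥ β) ^ 2 / (2 * s))) ^ a₀
            * normalDensity μ₀ Λ₀ s β * invGammaDensity α₀ γ₀ s := by
        simp only [normalDensity, invGammaDensity, Fintype.card_fin]
    _ = ∫ s in Set.Ioi (0 : ℝ), √(Λ₀.det / Λn.det) * (γ₀ ^ α₀ / γn ^ αn)
          * (Gamma αn / Gamma α₀) * (2 * π) ^ (-(a₀ * N₀) / 2) * invGammaDensity αn γn s :=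
        setIntegral_congr_fun measurableSet_Ioi fun s (hs : 0 < s) => by
          simp only [hfactor s hs, Fintype.card_fin]
          rw [integral_const_mul, hΛn_pd.integral_normalDensity μn hs, mul_one]
    _ = _ := by rw [integral_const_mul, integral_invGammaDensity hαn_pos hγn_pos, mul_one]

/-- Normalising constant for Bayesian linear regression with a normal
inverse-Gamma prior (Equation 20): with `X⋆ = √a₀ X₀`, `y⋆ = √a₀ y₀`,
`Λₙ = X⋆ᵀX⋆ + Λ₀` (positive definite), `μₙ = Λₙ⁻¹(Λ₀μ₀ + X⋆ᵀy⋆)`,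
`αₙ = α₀ + a₀N₀/2` and
`γₙ = γ₀ + (y⋆ᵀy⋆ + μ₀ᵀΛ₀μ₀ − μₙᵀΛₙμₙ)/2`, the double integral of the tempered
regression likelihood against the normal inverse-Gamma prior equals
`√(det Λ₀/det Λₙ) (γ₀^{α₀}/γₙ^{αₙ}) (Γ(αₙ)/Γ(α₀)) (2π)^{−a₀N₀/2}`. -/
theorem power_prior_linear_regression_normalising_constant
    (N₀ P : ℕ) (hN₀ : 0 < N₀) (hP : 0 < P)
    (X₀ : Matrix (Fin N₀) (Fin P) ℝ) (y₀ : Fin N₀ → ℝ)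
    (Λ₀ : Matrix (Fin P) (Fin P) ℝ) (hΛ₀ : Λ₀.PosDef)
    (μ₀ : Fin P → ℝ) (α₀ γ₀ : ℝ) (hα₀ : 0 < α₀) (hγ₀ : 0 < γ₀)
    (a₀ : ℝ) (ha₀ : 0 ≤ a₀)
    (Xs : Matrix (Fin N₀) (Fin P) ℝ) (hXs : Xs = Real.sqrt a₀ • X₀)
    (ys : Fin N₀ → ℝ) (hys : ys = Real.sqrt a₀ • y₀)
    (Λn : Matrix (Fin P) (Fin P) ℝ) (hΛn : Λn = Xsᵀ * Xs + Λ₀)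
    (μn : Fin P → ℝ) (hμn : μn = Λn⁻¹ *ᵥ (Λ₀ *ᵥ μ₀ + Xsᵀ *ᵥ ys))
    (αn : ℝ) (hαn : αn = α₀ + a₀ * N₀ / 2)
    (γn : ℝ)
    (hγn : γn = γ₀ + (ys ⬝ᵥ ys + μ₀ ⬝ᵥ (Λ₀ *ᵥ μ₀) - μn ⬝ᵥ (Λn *ᵥ μn)) / 2) :
    Λn.PosDef ∧
    ∫ s in Set.Ioi (0 : ℝ), ∫ β : Fin P → ℝ,
        (∏ i, (2 * π * s) ^ (-(1 : ℝ) / 2)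
            * Real.exp (-(y₀ i - X₀ i ⬝ᵥ β) ^ 2 / (2 * s))) ^ a₀
          * ((2 * π * s) ^ (-(P : ℝ) / 2) * Real.sqrt Λ₀.det
              * Real.exp (-((β - μ₀) ⬝ᵥ (Λ₀ *ᵥ (β - μ₀))) / (2 * s)))
          * ((γ₀ ^ α₀ / Real.Gamma α₀) * s ^ (-α₀ - 1)
              * Real.exp (-γ₀ / s))
      = Real.sqrt (Λ₀.det / Λn.det) * (γ₀ ^ α₀ / γn ^ αn)
          * (Real.Gamma αn / Real.Gamma α₀)
          * (2 * π) ^ (-(a₀ * N₀) / 2) :=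
  power_prior_linear_regression_normalising_constant_general N₀ P X₀ y₀ Λ₀ hΛ₀ μ₀ α₀ γ₀ hα₀ hγ₀ a₀
    ha₀ Xs hXs ys hys Λn hΛn μn hμn αn hαn γn hγn
end
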